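/- Let μ0 ≤_cvx μ1 be probability measures on ℝ^d with μ1 compactly supported. Let μ̂0 be the law of an optimal quadratic primal quantization of μ0 at level N (so there exists a martingale coupling between μ̂0 and μ0 with quadratic cost e_{2,N}(μ0)²) and let μ̂1 be an optimal quadratic dual quantization of μ1 at level M (so μ1 ≤_cvx μ̂1, μ̂1 is supported on at most M points, and there exists a martingale coupling between μ1 and μ̂1 with quadratic cost d_{2,M}(μ1)²). Then for every martingale coupling μ ∈ M(μ0,μ1) there exists a martingale coupling μ̂ ∈ M(μ̂0,μ̂1) such that W_2²(μ̂,μ) ≤ e_{2,N}²(μ0) + d_{2,M}²(μ1), where W_2 denotes the quadratic Wasserstein distance on probability measures over ℝ^d×ℝ^d. -/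

import Mathlib

open MeasureTheory Metric
open scoped ENNReal

noncomputable section

abbrev Euc (d : ℕ) : Type := EuclideanSpace ℝ (Fin d)

/-- Convex order `μ ≤_cvx ν` (tested on convex functions with linear growth). -/
def cvxOrder {d : ℕ} (μ ν : Measure (Euc d)) : Prop :=
  ∀ φ : Euc d → ℝ, ConvexOn ℝ Set.univ φ → (∃ C : ℝ, ∀ x, |φ x| ≤ C * (1 + ‖x‖)) →
    ∫ x, φ x ∂μ ≤ ∫ x, φ x ∂ν

/-- Martingale coupling between `μ` and `ν`. -/
def IsMartingaleCoupling {d : ℕ} (M : Measure (Euc d × Euc d)) (μ ν : Measure (Euc d)) : Prop :=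
  IsProbabilityMeasure M ∧ M.fst = μ ∧ M.snd = ν ∧
    ∀ φ : Euc d → Euc d, Measurable φ → (∃ C : ℝ, ∀ x, ‖φ x‖ ≤ C) →
      ∫ z, (inner ℝ (φ z.1) (z.2 - z.1) : ℝ) ∂M = 0

/-- Quadratic quantization error of the grid `Γ` for `μ`. -/
def e2 {d : ℕ} (Γ : Finset (Euc d)) (μ : Measure (Euc d)) : ℝ :=
  (∫ x, infDist x (Γ : Set (Euc d)) ^ 2 ∂μ) ^ (1/2 : ℝ)

/-- Optimal quadratic (primal) quantization error at level `N`. -/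
def e2N {d : ℕ} (N : ℕ) (μ : Measure (Euc d)) : ℝ :=
  sInf { r | ∃ Γ : Finset (Euc d), Γ.Nonempty ∧ Γ.card ≤ N ∧ r = e2 Γ μ }

/-- `ν` is supported on at most `N` points. -/
def supportedOnAtMost {d : ℕ} (ν : Measure (Euc d)) (N : ℕ) : Prop :=
  ∃ s : Finset (Euc d), s.card ≤ N ∧ ν (((s : Set (Euc d)))ᶜ) = 0

/-- Squared optimal dual quantization error at level `N`: infimum of the squared quadratic
cost of martingale couplings from `μ` to measures with at most `N` support points that
dominate `μ` in the convex order. -/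
def d2Msq {d : ℕ} (μ : Measure (Euc d)) (N : ℕ) : ℝ :=
  sInf { r | ∃ (ν : Measure (Euc d)) (π : Measure (Euc d × Euc d)),
      IsProbabilityMeasure ν ∧ supportedOnAtMost ν N ∧ cvxOrder μ ν ∧
      IsMartingaleCoupling π μ ν ∧ r = ∫ z, ‖z.2 - z.1‖ ^ 2 ∂π }

/-- Squared quadratic Wasserstein distance between probability measures on `ℝ^d × ℝ^d`,
with the cost `|x̂₀-x₀|² + |x̂₁-x₁|²`. -/
def W2sqPair {d : ℕ} (π ρ : Measure (Euc d × Euc d)) : ℝ :=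
  sInf { r | ∃ M : Measure ((Euc d × Euc d) × (Euc d × Euc d)), IsProbabilityMeasure M ∧
      M.fst = π ∧ M.snd = ρ ∧
      r = ∫ z, (‖z.1.1 - z.2.1‖ ^ 2 + ‖z.1.2 - z.2.2‖ ^ 2) ∂M }

/-!
Glue the three couplings `(x̂₀, x₀) ∼ π0`, `(x₀, x₁) ∼ μ`, `(x₁, x̂₁) ∼ π1` into a Markov chain
`x̂₀ → x₀ → x₁ → x̂₁`, each step drawn from the disintegration kernel of the corresponding
coupling. The kernel of a martingale coupling has barycentre `x` at almost every `x` (test the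
martingale property against the bounded field `b / (1 + ‖b‖)`, `b` the conditional drift), so
along the chain each of the increments `x₀ - x̂₀`, `x₁ - x₀`, `x̂₁ - x₁` is centred given
everything before it, hence orthogonal to bounded functions of `x̂₀`: `(x̂₀, x̂₁)` is a martingale
coupling of `(μhat0, μhat1)`. The chain also couples `(x̂₀, x̂₁)` with `(x₀, x₁) ∼ μ`, at cost
`E‖x̂₀ - x₀‖² + E‖x̂₁ - x₁‖²`, which are the two quantization errors.
-/

open ProbabilityTheory
open scoped RealInnerProductSpace

section Integral

variable {α : Type*} [MeasurableSpace α] {μ : Measure α}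

lemma integral_add_eq_zero {G : Type*} [NormedAddCommGroup G] [NormedSpace ℝ G] {f g : α → G}
    (hf : ∫ x, f x ∂μ = 0) (hg : Integrable g μ) (hg0 : ∫ x, g x ∂μ = 0) :
    ∫ x, (f x + g x) ∂μ = 0 := by
  by_cases hfg : Integrable (fun x => f x + g x) μ
  · rw [integral_add ((integrable_add_iff_integrable_left' hg).mp hfg) hg, hf, hg0, add_zero]
  · exact integral_undef hfg

lemma integral_add_le_of_nonneg {f g : α → ℝ} (hf : 0 ≤ f) (hg : 0 ≤ g)
    (hfm : AEStronglyMeasurable f μ) (hgm : AEStronglyMeasurable g μ) :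
    ∫ x, (f x + g x) ∂μ ≤ ∫ x, f x ∂μ + ∫ x, g x ∂μ := by
  by_cases hfg : Integrable (fun x => f x + g x) μ
  · have hdom : ∀ x, ‖f x‖ ≤ f x + g x ∧ ‖g x‖ ≤ f x + g x := fun x => by
      rw [Real.norm_of_nonneg (hf x), Real.norm_of_nonneg (hg x)]
      exact ⟨le_add_of_nonneg_right (hg x), le_add_of_nonneg_left (hf x)⟩
    rw [integral_add (hfg.mono' hfm (.of_forall fun x => (hdom x).1))
      (hfg.mono' hgm (.of_forall fun x => (hdom x).2))]
  · rw [integral_undef hfg]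
    exact add_nonneg (integral_nonneg hf) (integral_nonneg hg)

variable {E : Type*} [NormedAddCommGroup E] [InnerProductSpace ℝ E]

lemma MeasureTheory.Integrable.inner_of_norm_le {φ g : α → E} {C : ℝ}
    (hφ : AEStronglyMeasurable φ μ) (hφC : ∀ x, ‖φ x‖ ≤ C) (hg : Integrable g μ) :
    Integrable (fun x => ⟪φ x, g x⟫) μ := by
  refine (hg.norm.const_mul C).mono' (hφ.inner hg.aestronglyMeasurable) (.of_forall fun x => ?_)
  exact (norm_inner_le_norm _ _).trans
    (mul_le_mul_of_nonneg_right (hφC x) (norm_nonneg _))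

end Integral

section Glue

variable {α β γ : Type*} [MeasurableSpace α] [MeasurableSpace β] [MeasurableSpace γ]

lemma map_compProd_prodMkLeft (ρ : Measure (α × β)) [IsFiniteMeasure ρ] (κ : Kernel β γ)
    [IsSFiniteKernel κ] :
    (ρ ⊗ₘ κ.prodMkLeft α).map (fun p => (p.1.2, p.2)) = ρ.snd ⊗ₘ κ := by
  have hg : Measurable fun p : (α × β) × γ => (p.1.2, p.2) := by fun_prop
  ext s hs
  rw [Measure.map_apply hg hs, Measure.compProd_apply (hg hs), Measure.compProd_apply hs,
    Measure.snd, lintegral_map (Kernel.measurable_kernel_prodMk_left hs) measurable_snd]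
  rfl

variable [StandardBorelSpace γ] [Nonempty γ]

def glue (ρ : Measure (α × β)) (π : Measure (β × γ)) [IsFiniteMeasure π] :
    Measure ((α × β) × γ) :=
  ρ ⊗ₘ π.condKernel.prodMkLeft α

variable (ρ : Measure (α × β)) (π : Measure (β × γ)) [IsFiniteMeasure π]

instance [IsProbabilityMeasure ρ] : IsProbabilityMeasure (glue ρ π) := by
  unfold glue; infer_instance

lemma glue_fst [SFinite ρ] : (glue ρ π).fst = ρ := Measure.fst_compProd _ _

lemma map_glue [IsFiniteMeasure ρ] (h : ρ.snd = π.fst) :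
    (glue ρ π).map (fun p => (p.1.2, p.2)) = π := by
  rw [glue, map_compProd_prodMkLeft, h, Measure.disintegrate]

lemma snd_glue [IsFiniteMeasure ρ] (h : ρ.snd = π.fst) : (glue ρ π).snd = π.snd := by
  conv_rhs => rw [← map_glue ρ π h, Measure.snd_map_prodMk (by fun_prop)]
  rfl

end Glue

lemma integrable_snd_sub_fst {E : Type*} [NormedAddCommGroup E] [MeasurableSpace E]
    [BorelSpace E] [SecondCountableTopology E] (ρ : Measure (E × E))
    (h1 : Integrable (fun x => ‖x‖) ρ.fst) (h2 : Integrable (fun x => ‖x‖) ρ.snd) :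
    Integrable (fun z => z.2 - z.1) ρ := by
  have hid {ν : Measure E} (h : Integrable (fun x => ‖x‖) ν) : Integrable (fun x => x) ν :=
    (integrable_norm_iff aestronglyMeasurable_id).mp h
  exact ((integrable_map_measure aestronglyMeasurable_id measurable_snd.aemeasurable).mp
    (hid h2)).sub
    ((integrable_map_measure aestronglyMeasurable_id measurable_fst.aemeasurable).mp (hid h1))

section Barycenter

variable {E : Type*} [NormedAddCommGroup E] [InnerProductSpace ℝ E] [CompleteSpace E]
  [SecondCountableTopology E] [MeasurableSpace E] [BorelSpace E]

lemma integral_inner_sub_eq_integral_condKernel (ρ : Measure (E × E)) [IsFiniteMeasure ρ]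
    (hint : Integrable (fun z => z.2 - z.1) ρ) {φ : E → E} {C : ℝ} (hφ : Measurable φ)
    (hφC : ∀ x, ‖φ x‖ ≤ C) :
    ∫ z, ⟪φ z.1, z.2 - z.1⟫ ∂ρ = ∫ x, ⟪φ x, ∫ y, y - x ∂ρ.condKernel x⟫ ∂ρ.fst := by
  have hdis : ρ.fst ⊗ₘ ρ.condKernel = ρ := ρ.disintegrate ρ.condKernel
  rw [← hdis] at hint
  have hsec := ((Measure.integrable_compProd_iff hint.aestronglyMeasurable).mp hint).1
  calc ∫ z, ⟪φ z.1, z.2 - z.1⟫ ∂ρ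
      = ∫ z, ⟪φ z.1, z.2 - z.1⟫ ∂(ρ.fst ⊗ₘ ρ.condKernel) := by rw [hdis]
    _ = ∫ x, ∫ y, ⟪φ x, y - x⟫ ∂ρ.condKernel x ∂ρ.fst :=
        Measure.integral_compProd <| hint.inner_of_norm_le
          (hφ.comp measurable_fst).aestronglyMeasurable fun z => hφC z.1
    _ = ∫ x, ⟪φ x, ∫ y, y - x ∂ρ.condKernel x⟫ ∂ρ.fst :=
        integral_congr_ae <| by filter_upwards [hsec] with x hx using integral_inner hx _

lemma ae_integral_condKernel_eq_self (ρ : Measure (E × E)) [IsFiniteMeasure ρ]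
    (hint : Integrable (fun z => z.2 - z.1) ρ)
    (hmg : ∀ φ : E → E, Measurable φ → (∃ C : ℝ, ∀ x, ‖φ x‖ ≤ C) →
      ∫ z, ⟪φ z.1, z.2 - z.1⟫ ∂ρ = 0) :
    ∀ᵐ x ∂ρ.fst, Integrable (fun y => y) (ρ.condKernel x) ∧ ∫ y, y ∂ρ.condKernel x = x := by
  set κ := ρ.condKernel
  have hint' : Integrable (fun z => z.2 - z.1) (ρ.fst ⊗ₘ κ) := by rwa [ρ.disintegrate κ]
  obtain ⟨hsec, hnorm⟩ := (Measure.integrable_compProd_iff hint'.aestronglyMeasurable).mp hint'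
  set b : E → E := fun x => ∫ y, y - x ∂κ x
  have hb : Measurable b := (StronglyMeasurable.integral_kernel_prod_right (κ := κ)
    (f := fun x y => y - x) (measurable_snd.sub measurable_fst).stronglyMeasurable).measurable
  have hdrift : ∀ᵐ x ∂ρ.fst, b x = 0 := by
    set φ : E → E := fun x => (1 + ‖b x‖)⁻¹ • b x
    have hφ : Measurable φ := (measurable_const.add hb.norm).inv.smul hb
    have hφC : ∀ x, ‖φ x‖ ≤ 1 := fun x => by
      rw [norm_smul, norm_inv, Real.norm_of_nonneg (by positivity),
        inv_mul_le_iff₀ (by positivity), mul_one]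
      linarith
    have hφb : ∀ x, ⟪φ x, b x⟫ = (1 + ‖b x‖)⁻¹ * ‖b x‖ ^ 2 := fun x => by
      rw [real_inner_smul_left, real_inner_self_eq_norm_sq]
    have h0 : ∫ x, (1 + ‖b x‖)⁻¹ * ‖b x‖ ^ 2 ∂ρ.fst = 0 := by
      simp_rw [← hφb]
      rw [← integral_inner_sub_eq_integral_condKernel ρ hint hφ hφC]
      exact hmg φ hφ ⟨1, hφC⟩
    have hint0 : Integrable (fun x => (1 + ‖b x‖)⁻¹ * ‖b x‖ ^ 2) ρ.fst := by
      refine hnorm.mono' (by fun_prop) (.of_forall fun x => ?_)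
      calc ‖(1 + ‖b x‖)⁻¹ * ‖b x‖ ^ 2‖ ≤ ‖b x‖ := by
            rw [Real.norm_of_nonneg (by positivity), inv_mul_le_iff₀ (by positivity)]
            nlinarith [norm_nonneg (b x)]
        _ ≤ ∫ y, ‖y - x‖ ∂κ x := norm_integral_le_integral_norm _
    filter_upwards [(integral_eq_zero_iff_of_nonneg (fun x => by positivity) hint0).mp h0]
      with x hx
    simpa [(by positivity : (0 : ℝ) < 1 + ‖b x‖).ne'] using hx
  filter_upwards [hdrift, hsec] with x hx hxint
  have hid : Integrable (fun y => y) (κ x) :=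
    (hxint.add (integrable_const x)).congr (.of_forall fun y => sub_add_cancel y x)
  refine ⟨hid, ?_⟩
  rw [← sub_eq_zero, ← hx]
  simp only [b]
  rw [integral_sub hid (integrable_const x), integral_const]
  simp

lemma integral_inner_sub_glue_eq_zero {α : Type*} [MeasurableSpace α] (ρ : Measure (α × E))
    [SFinite ρ] (π : Measure (E × E)) [IsFiniteMeasure π] (hρπ : ρ.snd = π.fst)
    (hint : Integrable (fun z => z.2 - z.1) π)
    (hmg : ∀ φ : E → E, Measurable φ → (∃ C : ℝ, ∀ x, ‖φ x‖ ≤ C) →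
      ∫ z, ⟪φ z.1, z.2 - z.1⟫ ∂π = 0) (ψ : α × E → E) :
    ∫ p, ⟪ψ p.1, p.2 - p.1.2⟫ ∂glue ρ π = 0 := by
  by_cases hi : Integrable (fun p : (α × E) × E => ⟪ψ p.1, p.2 - p.1.2⟫) (glue ρ π)
  · have hbar := ae_integral_condKernel_eq_self π hint hmg
    rw [← hρπ] at hbar
    replace hbar := ae_of_ae_map measurable_snd.aemeasurable hbar
    rw [glue, Measure.integral_compProd hi]
    refine integral_eq_zero_of_ae ?_
    filter_upwards [hbar] with q ⟨hq, hq'⟩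
    have hsub : Integrable (fun y => y - q.2) (π.condKernel q.2) := hq.sub (integrable_const _)
    simp only [Kernel.prodMkLeft_apply, Pi.zero_apply]
    rw [integral_inner hsub, integral_sub hq (integrable_const _), integral_const, hq']
    simp
  · exact integral_undef hi

lemma integral_inner_sub_glue_eq_zero_of_integral_eq_zero {α : Type*} [MeasurableSpace α]
    (ρ : Measure (α × E)) [IsFiniteMeasure ρ] (π : Measure (E × E)) [IsFiniteMeasure π]
    (hρπ : ρ.snd = π.fst) (hint : Integrable (fun z => z.2 - z.1) π)
    (hmg : ∀ φ : E → E, Measurable φ → (∃ C : ℝ, ∀ x, ‖φ x‖ ≤ C) →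
      ∫ z, ⟪φ z.1, z.2 - z.1⟫ ∂π = 0)
    {ψ g : α → E} {C : ℝ} (hψ : Measurable ψ) (hψC : ∀ a, ‖ψ a‖ ≤ C) (hg : Measurable g)
    (hρ : ∫ q, ⟪ψ q.1, q.2 - g q.1⟫ ∂ρ = 0) :
    ∫ p, ⟪ψ p.1.1, p.2 - g p.1.1⟫ ∂glue ρ π = 0 := by
  have hsplit : ∀ p : (α × E) × E,
      ⟪ψ p.1.1, p.2 - g p.1.1⟫ = ⟪ψ p.1.1, p.1.2 - g p.1.1⟫ + ⟪ψ p.1.1, p.2 - p.1.2⟫ :=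
    fun p => by rw [← inner_add_right, sub_add_sub_cancel']
  have hincr : Integrable (fun p : (α × E) × E => p.2 - p.1.2) (glue ρ π) := by
    have h := hint
    rw [← map_glue ρ π hρπ] at h
    exact (integrable_map_measure h.aestronglyMeasurable (by fun_prop)).mp h
  have hρm : Measurable fun q : α × E => ⟪ψ q.1, q.2 - g q.1⟫ := by fun_prop
  have hfirst : ∫ p, ⟪ψ p.1.1, p.1.2 - g p.1.1⟫ ∂glue ρ π = 0 :=
    calc ∫ p, ⟪ψ p.1.1, p.1.2 - g p.1.1⟫ ∂glue ρ π
        = ∫ q, ⟪ψ q.1, q.2 - g q.1⟫ ∂(glue ρ π).fst :=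
          (integral_map measurable_fst.aemeasurable hρm.aestronglyMeasurable).symm
      _ = 0 := by rw [glue_fst, hρ]
  simp_rw [hsplit]
  exact integral_add_eq_zero hfirst
    (hincr.inner_of_norm_le (hψ.comp (by fun_prop)).aestronglyMeasurable fun p => hψC p.1.1)
    (integral_inner_sub_glue_eq_zero ρ π hρπ hint hmg (ψ ∘ Prod.fst))

end Barycenter

section Quantization

variable {d : ℕ}

lemma integrable_norm_of_supportedOnAtMost {ν : Measure (Euc d)} [IsFiniteMeasure ν] {N : ℕ}
    (h : supportedOnAtMost ν N) : Integrable (fun x => ‖x‖) ν := by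
  obtain ⟨s, -, hs⟩ := h
  refine .of_bound measurable_norm.aestronglyMeasurable (∑ y ∈ s, ‖y‖) ?_
  filter_upwards [mem_ae_iff.mpr hs] with x hx
  rw [norm_norm]
  exact Finset.single_le_sum (f := fun y => ‖y‖) (fun y _ => norm_nonneg y) hx

lemma W2sqPair_fst_snd_le (Λ : Measure ((Euc d × Euc d) × (Euc d × Euc d)))
    [IsProbabilityMeasure Λ] :
    W2sqPair Λ.fst Λ.snd ≤ ∫ z, (‖z.1.1 - z.2.1‖ ^ 2 + ‖z.1.2 - z.2.2‖ ^ 2) ∂Λ :=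
  csInf_le ⟨0, by rintro r ⟨Λ', -, -, -, rfl⟩; exact integral_nonneg fun z => by positivity⟩
    ⟨Λ, inferInstance, rfl, rfl, rfl⟩

lemma IsMartingaleCoupling.integrable_sub {π : Measure (Euc d × Euc d)} {μ ν : Measure (Euc d)}
    (h : IsMartingaleCoupling π μ ν) (hμ : Integrable (fun x => ‖x‖) μ)
    (hν : Integrable (fun x => ‖x‖) ν) : Integrable (fun z => z.2 - z.1) π :=
  integrable_snd_sub_fst π (h.2.1 ▸ hμ) (h.2.2.1 ▸ hν)

variable {μ0 μ1 μhat0 μhat1 : Measure (Euc d)} {π0 μ π1 : Measure (Euc d × Euc d)}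
  [IsFiniteMeasure μ] [IsFiniteMeasure π1]

/-- The chain `glue (glue π0 μ) π1` has coordinates `(((x̂₀, x₀), x₁), x̂₁)`. -/
def chainCoupling (π0 μ π1 : Measure (Euc d × Euc d)) [IsFiniteMeasure μ] [IsFiniteMeasure π1] :
    Measure (Euc d × Euc d) :=
  (glue (glue π0 μ) π1).map fun w => (w.1.1.1, w.2)

lemma isMartingaleCoupling_chainCoupling (hπ0 : IsMartingaleCoupling π0 μhat0 μ0)
    (hμ : IsMartingaleCoupling μ μ0 μ1) (hπ1 : IsMartingaleCoupling π1 μ1 μhat1)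
    (hμint : Integrable (fun z => z.2 - z.1) μ) (hπ1int : Integrable (fun z => z.2 - z.1) π1) :
    IsMartingaleCoupling (chainCoupling π0 μ π1) μhat0 μhat1 := by
  obtain ⟨hπ0P, hπ0fst, hπ0snd, hπ0mg⟩ := hπ0
  obtain ⟨-, hμfst, hμsnd, hμmg⟩ := hμ
  obtain ⟨-, hπ1fst, hπ1snd, hπ1mg⟩ := hπ1
  have h01 : π0.snd = μ.fst := hπ0snd.trans hμfst.symm
  have h12 : (glue π0 μ).snd = π1.fst := by rw [snd_glue _ _ h01, hμsnd, hπ1fst]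
  have hproj : Measurable fun w : ((Euc d × Euc d) × Euc d) × Euc d => (w.1.1.1, w.2) := by
    fun_prop
  refine ⟨Measure.isProbabilityMeasure_map hproj.aemeasurable, ?_, ?_, fun φ hφ ⟨C, hφC⟩ => ?_⟩
  · rw [chainCoupling, Measure.fst_map_prodMk measurable_snd, ← hπ0fst]
    calc _ = (glue (glue π0 μ) π1).fst.fst.fst := by
          simp only [Measure.fst, Measure.map_map measurable_fst measurable_fst,
            Measure.map_map measurable_fst (measurable_fst.comp measurable_fst)]
          rfl
      _ = π0.fst := by rw [glue_fst, glue_fst]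
  · rw [chainCoupling, Measure.snd_map_prodMk (by fun_prop), ← hπ1snd, ← snd_glue _ _ h12]
    rfl
  · have hstep := integral_inner_sub_glue_eq_zero_of_integral_eq_zero π0 μ h01 hμint hμmg hφ hφC
      measurable_id (hπ0mg φ hφ ⟨C, hφC⟩)
    rw [chainCoupling, integral_map hproj.aemeasurable (by fun_prop)]
    exact integral_inner_sub_glue_eq_zero_of_integral_eq_zero (glue π0 μ) π1 h12 hπ1int hπ1mg
      (hφ.comp measurable_fst) (fun q => hφC q.1) measurable_fst hstep

lemma W2sqPair_chainCoupling_le [IsProbabilityMeasure π0] (h01 : π0.snd = μ.fst)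
    (h12 : μ.snd = π1.fst) :
    W2sqPair (chainCoupling π0 μ π1) μ ≤ ∫ z, ‖z.2 - z.1‖ ^ 2 ∂π0 + ∫ z, ‖z.2 - z.1‖ ^ 2 ∂π1 := by
  set Λ := glue (glue π0 μ) π1
  have hΛ0 : Λ.map (Prod.fst ∘ Prod.fst) = π0 := by
    rw [← Measure.map_map measurable_fst measurable_fst]
    exact (congrArg Measure.fst (glue_fst _ _)).trans (glue_fst _ _)
  have hΛμ : Λ.map (fun w => (w.1.1.2, w.1.2)) = μ := by
    rw [← map_glue π0 μ h01, ← glue_fst (glue π0 μ) π1, Measure.fst,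
      Measure.map_map (by fun_prop) measurable_fst]
    rfl
  have hΛ1 : Λ.map (fun w => (w.1.2, w.2)) = π1 :=
    map_glue _ _ (by rw [snd_glue _ _ h01, h12])
  have hcoupling : Measurable fun w : ((Euc d × Euc d) × Euc d) × Euc d =>
      ((w.1.1.1, w.2), (w.1.1.2, w.1.2)) := by fun_prop
  set Γ := Λ.map fun w => ((w.1.1.1, w.2), (w.1.1.2, w.1.2))
  have : IsProbabilityMeasure Γ := Measure.isProbabilityMeasure_map hcoupling.aemeasurable
  have hΓ : Γ.fst = chainCoupling π0 μ π1 ∧ Γ.snd = μ :=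
    ⟨Measure.fst_map_prodMk (by fun_prop), (Measure.snd_map_prodMk (by fun_prop)).trans hΛμ⟩
  calc W2sqPair (chainCoupling π0 μ π1) μ = W2sqPair Γ.fst Γ.snd := by rw [hΓ.1, hΓ.2]
    _ ≤ ∫ z, (‖z.1.1 - z.2.1‖ ^ 2 + ‖z.1.2 - z.2.2‖ ^ 2) ∂Γ := W2sqPair_fst_snd_le Γ
    _ = ∫ w, (‖w.1.1.1 - w.1.1.2‖ ^ 2 + ‖w.2 - w.1.2‖ ^ 2) ∂Λ :=
        integral_map hcoupling.aemeasurable (by fun_prop)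
    _ ≤ ∫ w, ‖w.1.1.1 - w.1.1.2‖ ^ 2 ∂Λ + ∫ w, ‖w.2 - w.1.2‖ ^ 2 ∂Λ :=
        integral_add_le_of_nonneg (fun _ => by positivity) (fun _ => by positivity)
          (by fun_prop) (by fun_prop)
    _ = ∫ z, ‖z.2 - z.1‖ ^ 2 ∂π0 + ∫ z, ‖z.2 - z.1‖ ^ 2 ∂π1 := by
        rw [← hΛ0, ← hΛ1, integral_map (by fun_prop) (by fun_prop),
          integral_map (by fun_prop) (by fun_prop)]
        simp only [Function.comp_apply, norm_sub_rev]

end Quantization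

theorem stmt4_general {d : ℕ} (N M : ℕ)
    (μ0 μ1 : Measure (Euc d))
    (hm0 : Integrable (fun x => ‖x‖) μ0) (hm1 : Integrable (fun x => ‖x‖) μ1)
    (μhat0 μhat1 : Measure (Euc d))
    [IsProbabilityMeasure μhat1]
    (hq0 : ∃ π0 : Measure (Euc d × Euc d), IsMartingaleCoupling π0 μhat0 μ0 ∧
        ∫ z, ‖z.2 - z.1‖ ^ 2 ∂π0 = (e2N N μ0) ^ 2)
    (hq1supp : supportedOnAtMost μhat1 M)
    (hq1 : ∃ π1 : Measure (Euc d × Euc d), IsMartingaleCoupling π1 μ1 μhat1 ∧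
        ∫ z, ‖z.2 - z.1‖ ^ 2 ∂π1 = d2Msq μ1 M) :
    ∀ μ : Measure (Euc d × Euc d), IsMartingaleCoupling μ μ0 μ1 →
      ∃ μhat : Measure (Euc d × Euc d), IsMartingaleCoupling μhat μhat0 μhat1 ∧
        W2sqPair μhat μ ≤ (e2N N μ0) ^ 2 + d2Msq μ1 M := by
  intro μ hμ
  obtain ⟨π0, hπ0, hπ0cost⟩ := hq0
  obtain ⟨π1, hπ1, hπ1cost⟩ := hq1
  have := hπ0.1
  have := hμ.1
  have := hπ1.1
  have hμint := hμ.integrable_sub hm0 hm1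
  have hπ1int := hπ1.integrable_sub hm1 (integrable_norm_of_supportedOnAtMost hq1supp)
  refine ⟨chainCoupling π0 μ π1, isMartingaleCoupling_chainCoupling hπ0 hμ hπ1 hμint hπ1int, ?_⟩
  rw [← hπ0cost, ← hπ1cost]
  exact W2sqPair_chainCoupling_le (hπ0.2.2.1.trans hμ.2.1.symm) (hμ.2.2.1.trans hπ1.2.1.symm)

/-- Let `μ0 ≤_cvx μ1` with `μ1` compactly supported, `μ̂0` the law of an
optimal quadratic primal quantization of `μ0` at level `N` and `μ̂1` an optimal quadratic dual
quantization of `μ1` at level `M`. Then every martingale coupling `μ` of `(μ0,μ1)` admits a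
martingale coupling `μ̂` of `(μ̂0,μ̂1)` with `W₂²(μ̂,μ) ≤ e_{2,N}²(μ0) + d_{2,M}²(μ1)`. -/
theorem stmt4 {d : ℕ} (N M : ℕ)
    (μ0 μ1 : Measure (Euc d)) [IsProbabilityMeasure μ0] [IsProbabilityMeasure μ1]
    (hm0 : Integrable (fun x => ‖x‖) μ0) (hm1 : Integrable (fun x => ‖x‖) μ1)
    (hcvx : cvxOrder μ0 μ1)
    (hK : ∃ K : Set (Euc d), IsCompact K ∧ μ1 Kᶜ = 0)
    (μhat0 μhat1 : Measure (Euc d))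
    [IsProbabilityMeasure μhat0] [IsProbabilityMeasure μhat1]
    (hq0 : ∃ π0 : Measure (Euc d × Euc d), IsMartingaleCoupling π0 μhat0 μ0 ∧
        ∫ z, ‖z.2 - z.1‖ ^ 2 ∂π0 = (e2N N μ0) ^ 2)
    (hq1cvx : cvxOrder μ1 μhat1) (hq1supp : supportedOnAtMost μhat1 M)
    (hq1 : ∃ π1 : Measure (Euc d × Euc d), IsMartingaleCoupling π1 μ1 μhat1 ∧
        ∫ z, ‖z.2 - z.1‖ ^ 2 ∂π1 = d2Msq μ1 M) :
    ∀ μ : Measure (Euc d × Euc d), IsMartingaleCoupling μ μ0 μ1 →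
      ∃ μhat : Measure (Euc d × Euc d), IsMartingaleCoupling μhat μhat0 μhat1 ∧
        W2sqPair μhat μ ≤ (e2N N μ0) ^ 2 + d2Msq μ1 M :=
  stmt4_general N M μ0 μ1 hm0 hm1 μhat0 μhat1 hq0 hq1supp hq1

end
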